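/- Let n ≥ 3. Define Dₙ as the set of d > 0 such that for all x, y ∈ ℝⁿ with |x−y| = d, there exists a finite set S ⊆ ℝⁿ containing x and y such that every unit-distance preserving map f: S → ℂⁿ satisfies φₙ(f(x),f(y)) = d². If d ∈ Dₙ, then (2/n)·d ∈ Dₙ. -/

import Mathlib

noncomputable def phi (n : ℕ) (x y : Fin n → ℂ) : ℂ := ∑ i, (x i - y i) ^ 2

/-- `f` preserves unit distance on the set `S`. -/
def UnitPreservingOn (n : ℕ) (S : Set (EuclideanSpace ℝ (Fin n)))
    (f : EuclideanSpace ℝ (Fin n) → (Fin n → ℂ)) : Prop :=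
  ∀ a ∈ S, ∀ b ∈ S, dist a b = 1 → phi n (f a) (f b) = 1

/-- `d ∈ Dₙ`: `d > 0` and for all `x y` at distance `d` there is a finite set `S`
containing `x` and `y` such that every unit-distance preserving map `f : S → ℂⁿ`
satisfies `φₙ(f x, f y) = d²`. -/
def MemD (n : ℕ) (d : ℝ) : Prop :=
  0 < d ∧ ∀ x y : EuclideanSpace ℝ (Fin n), dist x y = d →
    ∃ S : Finset (EuclideanSpace ℝ (Fin n)), x ∈ S ∧ y ∈ S ∧
      ∀ f : EuclideanSpace ℝ (Fin n) → (Fin n → ℂ),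
        UnitPreservingOn n (↑S) f → phi n (f x) (f y) = (d : ℂ) ^ 2

/-!
Let `κ = √(2 + 2/n)`. Everything rests on one rigidity step: if `a, b, ℓ ∈ Dₙ`,
`n D² = 4n b² - 2(n-1) a²`, `ℓ ≤ 2D` and `ℓ ≠ D`, then `D ∈ Dₙ`. For `|x - y| = D` there are
`n` points `pᵢ`, pairwise at distance `a` and at distance `b` from both `x` and `y`. Under a
unit-preserving `f`, the vectors `f pᵢ - f x` have the Gram matrix `(a²/2) I + (b² - a²/2) J`
for the form `φₙ`, which is invertible; this pins `f y - f x` down to a multiple of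
`∑ (f pᵢ - f x)` and leaves only `φₙ(f x, f y) = D²` or `f x = f y`. The collapse is excluded
by a second simplex over a point `z` with `|x - z| = D`, `|y - z| = ℓ`.

With `a = b = ℓ` the step gives `κ b ∈ Dₙ` for `b ∈ Dₙ`, hence `κᵏ d ∈ Dₙ` for all `k`; with
`a = κ b` it gives `(2/n) b ∈ Dₙ` once a suitable `ℓ` is available. For `K` large, `ℓ = d` works
for `b = κᴷ d`, and descending in `k`, `ℓ = κ (2/n) κᵏ d` works for `b = κᵏ d`.
-/

open Finset Matrix

theorem sub_dotProduct_sub_self {R m : Type*} [CommRing R] [Fintype m] (u v : m → R) :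
    (u - v) ⬝ᵥ (u - v) = u ⬝ᵥ u - 2 * (u ⬝ᵥ v) + v ⬝ᵥ v := by
  rw [sub_dotProduct, dotProduct_sub, dotProduct_sub, dotProduct_comm v u]; ring

section DotProduct

variable {K : Type*} [Field K] {ι m : Type*} [Fintype ι] [DecidableEq ι] [Fintype m]
  {c β : K}

theorem sum_smul_dotProduct_of_gram {P : ι → m → K}
    (hP : ∀ i j, P i ⬝ᵥ P j = if i = j then c + β else β) (g : ι → K) (j : ι) :
    (∑ i, g i • P i) ⬝ᵥ P j = β * ∑ i, g i + c * g j := by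
  have h : ∀ i, g i * (if i = j then c + β else β) = β * g i + if i = j then c * g i else 0 :=
    fun i => by split_ifs <;> ring
  simp only [sum_dotProduct, smul_dotProduct, hP, smul_eq_mul, h, Finset.sum_add_distrib,
    Finset.sum_ite_eq', Finset.mem_univ, if_true, Finset.mul_sum]

theorem linearIndependent_of_gram {P : ι → m → K} (hc : c ≠ 0)
    (hE : c + Fintype.card ι * β ≠ 0) (hP : ∀ i j, P i ⬝ᵥ P j = if i = j then c + β else β) :
    LinearIndependent K P := by
  rw [Fintype.linearIndependent_iff]
  intro g hg
  have hj : ∀ j, β * ∑ i, g i + c * g j = 0 := fun j => by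
    rw [← sum_smul_dotProduct_of_gram hP, hg, zero_dotProduct]
  have hsum : ∑ i, g i = 0 := by
    have h := Finset.sum_eq_zero fun j (_ : j ∈ univ) => hj j
    simp only [Finset.sum_add_distrib, ← Finset.mul_sum, sum_const, card_univ, nsmul_eq_mul] at h
    have h' : (c + Fintype.card ι * β) * ∑ i, g i = 0 := by linear_combination h
    exact (mul_eq_zero.1 h').resolve_left hE
  intro j
  simpa [hsum, hc] using hj j

theorem eq_zero_or_card_mul_dotProduct_self_eq [NeZero (2 : K)] {P : ι → ι → K} (hc : c ≠ 0)
    (hE : c + Fintype.card ι * β ≠ 0) (hP : ∀ i j, P i ⬝ᵥ P j = if i = j then c + β else β)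
    {Y : ι → K} (hY : ∀ i, 2 * (Y ⬝ᵥ P i) = Y ⬝ᵥ Y) :
    Y = 0 ∨ Fintype.card ι * (Y ⬝ᵥ Y) = 4 * (c + Fintype.card ι * β) := by
  set E := c + Fintype.card ι * β
  set t := Y ⬝ᵥ Y
  set S := ∑ i, P i
  have hS : ∀ j, S ⬝ᵥ P j = E := fun j => by
    simpa [E, add_comm, mul_comm] using sum_smul_dotProduct_of_gram hP 1 j
  have hspan : Submodule.span K (Set.range P) = ⊤ :=
    (linearIndependent_of_gram hc hE hP).span_eq_top_of_card_eq_finrank' (by simp)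
  -- `P` is a basis, so `Y` is determined by its products with the `P j`.
  have hYS : Y = (t / (2 * E)) • S := by
    rw [← sub_eq_zero]
    refine dotProduct_eq_zero _ fun w => ?_
    have h : dotProductBilin K K (Y - (t / (2 * E)) • S) = 0 :=
      LinearMap.ext_on_range hspan fun j => by
        simp only [dotProductBilin_apply_apply, LinearMap.zero_apply, sub_dotProduct,
          smul_dotProduct, hS, smul_eq_mul]
        field_simp
        linear_combination hY j
    exact LinearMap.congr_fun h w
  have hSS : S ⬝ᵥ S = Fintype.card ι * E := by
    rw [show S ⬝ᵥ S = ∑ i, S ⬝ᵥ P i from dotProduct_sum _ _ _]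
    simp [hS]
  have ht : t * (Fintype.card ι * t - 4 * E) = 0 := by
    have h : t = (t / (2 * E)) ^ 2 * (S ⬝ᵥ S) :=
      calc t = ((t / (2 * E)) • S) ⬝ᵥ ((t / (2 * E)) • S) := by rw [← hYS]
        _ = _ := by rw [smul_dotProduct, dotProduct_smul, smul_eq_mul, smul_eq_mul]; ring
    rw [hSS] at h
    field_simp at h
    linear_combination -h
  rcases mul_eq_zero.1 ht with h | h
  · left; rw [hYS, h, zero_div, zero_smul]
  · right; linear_combination h

end DotProduct

theorem phi_eq_dotProduct {n : ℕ} (x y : Fin n → ℂ) : phi n x y = (x - y) ⬝ᵥ (x - y) := by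
  simp [phi, dotProduct, sq]

theorem phi_comm {n : ℕ} (x y : Fin n → ℂ) : phi n x y = phi n y x := by
  simp only [phi, ← neg_sub (x _), neg_sq]

theorem phi_self {n : ℕ} (x : Fin n → ℂ) : phi n x x = 0 := by
  simp [phi]

theorem eq_or_phi_eq {n : ℕ} (hn : n ≠ 0) {P : Fin n → Fin n → ℂ} {X Y : Fin n → ℂ}
    {A B C : ℂ} (hA : A ≠ 0) (hC : C ≠ 0) (hABC : n * C = 2 * (2 * n * B - (n - 1) * A))
    (hP : ∀ i j, i ≠ j → phi n (P i) (P j) = A) (hX : ∀ i, phi n X (P i) = B)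
    (hY : ∀ i, phi n Y (P i) = B) :
    X = Y ∨ phi n X Y = C := by
  have hn' : (n : ℂ) ≠ 0 := by exact_mod_cast hn
  set Q := fun i => P i - X
  have hQ : ∀ i, Q i ⬝ᵥ Q i = B := fun i => by rw [← hX i, phi_comm, phi_eq_dotProduct]
  have hgram : ∀ i j, Q i ⬝ᵥ Q j = if i = j then A / 2 + (B - A / 2) else B - A / 2 := by
    intro i j
    split_ifs with hij
    · rw [hij, hQ]; ring
    · have h := hP i j hij
      rw [phi_eq_dotProduct, show P i - P j = Q i - Q j by simp [Q], sub_dotProduct_sub_self,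
        hQ, hQ] at h
      linear_combination -h / 2
  have hYQ : ∀ i, 2 * ((Y - X) ⬝ᵥ Q i) = (Y - X) ⬝ᵥ (Y - X) := fun i => by
    have h := hY i
    rw [phi_eq_dotProduct, show Y - P i = (Y - X) - Q i by simp [Q], sub_dotProduct_sub_self,
      hQ] at h
    linear_combination -h
  have hE : A / 2 + n * (B - A / 2) = n * C / 4 := by linear_combination -hABC / 4
  rcases eq_zero_or_card_mul_dotProduct_self_eq (by simpa using hA)
    (by rw [Fintype.card_fin, hE]; simp [hn', hC]) hgram hYQ with h | h
  · exact .inl (sub_eq_zero.1 h).symm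
  · right
    rw [Fintype.card_fin, hE] at h
    rw [phi_comm, phi_eq_dotProduct]
    exact mul_left_cancel₀ hn' (by linear_combination h)

section
variable {E : Type*} [NormedAddCommGroup E] [InnerProductSpace ℝ E]

theorem exists_isometryEquiv_apply_eq_apply_eq {x₀ y₀ x y : E} (h : dist x₀ y₀ = dist x y) :
    ∃ e : E ≃ᵢ E, e x₀ = x ∧ e y₀ = y := by
  have hnorm : ‖y₀ - x₀‖ = ‖y - x‖ := by
    rw [← dist_eq_norm, ← dist_eq_norm, dist_comm, h, dist_comm]
  set R := Submodule.reflection (ℝ ∙ ((y₀ - x₀) - (y - x)))ᗮ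
  refine ⟨((IsometryEquiv.addRight (-x₀)).trans R.toIsometryEquiv).trans
    (IsometryEquiv.addLeft x), ?_, ?_⟩
  · simp
  · simp [← sub_eq_add_neg, R, Submodule.reflection_sub hnorm]

end

namespace EuclideanSpace

variable {n : ℕ}

theorem norm_sq_smul_single_add_smul_single {i j : Fin n} (hij : i ≠ j) (a b : ℝ) :
    ‖a • single i (1 : ℝ) + b • single j (1 : ℝ)‖ ^ 2 = a ^ 2 + b ^ 2 := by
  simp [real_norm_sq_eq, add_sq, Finset.sum_add_distrib, ite_pow, mul_ite, hij.symm]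

theorem norm_sq_smul_const_add_smul_single (c a : ℝ) (i : Fin n) :
    ‖c • WithLp.toLp 2 (fun _ : Fin n => (1 : ℝ)) + a • single i (1 : ℝ)‖ ^ 2 =
      n * c ^ 2 + 2 * c * a + a ^ 2 := by
  simp [real_norm_sq_eq, add_sq, Finset.sum_add_distrib, ite_pow, mul_ite]

theorem exists_simplex_equidistant (hn : 0 < n) {a b : ℝ} (ha : 0 ≤ a) (hb : 0 ≤ b)
    {x y : EuclideanSpace ℝ (Fin n)}
    (hab : n * dist x y ^ 2 = 4 * n * b ^ 2 - 2 * (n - 1) * a ^ 2) :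
    ∃ p : Fin n → EuclideanSpace ℝ (Fin n), (∀ i j, i ≠ j → dist (p i) (p j) = a) ∧
      (∀ i, dist x (p i) = b) ∧ ∀ i, dist y (p i) = b := by
  set D := dist x y
  have hn' : (0 : ℝ) < n := by exact_mod_cast hn
  obtain ⟨σ, hσ⟩ : ∃ σ : ℝ, n * σ ^ 2 = D ^ 2 :=
    ⟨D / √n, by rw [div_pow, Real.sq_sqrt hn'.le]; field_simp⟩
  obtain ⟨α, hα⟩ : ∃ α : ℝ, 2 * α ^ 2 = a ^ 2 :=
    ⟨a / √2, by rw [div_pow, Real.sq_sqrt zero_le_two]; field_simp⟩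
  -- In the frame `x = 0`, `y = σ • 𝟙`, this `τ` makes `τ • 𝟙 + α • eᵢ` equidistant from both.
  obtain ⟨τ, hτ⟩ : ∃ τ : ℝ, n * τ = n * σ / 2 - α := ⟨σ / 2 - α / n, by field_simp⟩
  set one := WithLp.toLp 2 (fun _ : Fin n => (1 : ℝ))
  set e := fun i : Fin n => single i (1 : ℝ)
  set p₀ := fun i => τ • one + α • e i
  have hy₀ : dist 0 (σ • one) = D := by
    rw [dist_zero_left]
    refine (pow_left_inj₀ (norm_nonneg _) dist_nonneg two_ne_zero).1 ?_
    have h := norm_sq_smul_const_add_smul_single σ 0 ⟨0, hn⟩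
    simp only [zero_smul, add_zero, mul_zero, zero_pow two_ne_zero] at h
    rw [h, hσ]
  obtain ⟨g, hgx, hgy⟩ := exists_isometryEquiv_apply_eq_apply_eq hy₀
  refine ⟨fun i => g (p₀ i), fun i j hij => ?_, fun i => ?_, fun i => ?_⟩
  · rw [g.dist_eq, dist_eq_norm]
    refine (pow_left_inj₀ (norm_nonneg _) ha two_ne_zero).1 ?_
    rw [show p₀ i - p₀ j = α • e i + (-α) • e j by simp only [p₀]; module,
      norm_sq_smul_single_add_smul_single hij, ← hα]
    ring
  · rw [← hgx, g.dist_eq, dist_zero_left]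
    refine (pow_left_inj₀ (norm_nonneg _) hb two_ne_zero).1 ?_
    rw [norm_sq_smul_const_add_smul_single]
    refine mul_left_cancel₀ (show (4 * n : ℝ) ≠ 0 by positivity) ?_
    linear_combination (4 * (n * τ + n * σ / 2 + α)) * hτ + n * hσ + 2 * (n - 1) * hα + hab
  · rw [← hgy, g.dist_eq, dist_eq_norm]
    refine (pow_left_inj₀ (norm_nonneg _) hb two_ne_zero).1 ?_
    rw [show σ • one - p₀ i = (σ - τ) • one + (-α) • e i by simp only [p₀]; module,
      norm_sq_smul_const_add_smul_single]
    refine mul_left_cancel₀ (show (4 * n : ℝ) ≠ 0 by positivity) ?_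
    linear_combination (4 * (n * τ - 3 * n * σ / 2 + α)) * hτ + n * hσ + 2 * (n - 1) * hα + hab

theorem exists_dist_eq_dist_eq (hn : 2 ≤ n) {x y : EuclideanSpace ℝ (Fin n)} (hxy : 0 < dist x y)
    {ℓ : ℝ} (hℓ : 0 ≤ ℓ) (hℓxy : ℓ ≤ 2 * dist x y) :
    ∃ z, dist x z = dist x y ∧ dist y z = ℓ := by
  set D := dist x y
  obtain ⟨s, hs⟩ : ∃ s : ℝ, 2 * D * s = 2 * D ^ 2 - ℓ ^ 2 :=
    ⟨(2 * D ^ 2 - ℓ ^ 2) / (2 * D), by field_simp⟩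
  have hsD : s ^ 2 ≤ D ^ 2 := by
    refine le_of_mul_le_mul_left ?_ (by positivity : (0 : ℝ) < 4 * D ^ 2)
    nlinarith [mul_nonneg hℓ (by linarith : 0 ≤ 2 * D - ℓ), mul_nonneg hℓ hℓ]
  obtain ⟨h, hh⟩ : ∃ h : ℝ, h ^ 2 = D ^ 2 - s ^ 2 := ⟨√(D ^ 2 - s ^ 2), Real.sq_sqrt (by linarith)⟩
  set e₀ := single (⟨0, by omega⟩ : Fin n) (1 : ℝ)
  set e₁ := single (⟨1, by omega⟩ : Fin n) (1 : ℝ)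
  have h01 : (⟨0, by omega⟩ : Fin n) ≠ ⟨1, by omega⟩ := by simp
  have hy₀ : dist 0 (D • e₀) = D := by simp [e₀, norm_smul, hxy.le]
  obtain ⟨g, hgx, hgy⟩ := exists_isometryEquiv_apply_eq_apply_eq hy₀
  refine ⟨g (s • e₀ + h • e₁), ?_, ?_⟩
  · rw [← hgx, g.dist_eq, dist_zero_left]
    refine (pow_left_inj₀ (norm_nonneg _) hxy.le two_ne_zero).1 ?_
    rw [norm_sq_smul_single_add_smul_single h01]
    linear_combination hh
  · rw [← hgy, g.dist_eq, dist_eq_norm]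
    refine (pow_left_inj₀ (norm_nonneg _) hℓ two_ne_zero).1 ?_
    rw [show D • e₀ - (s • e₀ + h • e₁) = (D - s) • e₀ + (-h) • e₁ by module,
      norm_sq_smul_single_add_smul_single h01]
    linear_combination hh - hs

end EuclideanSpace

theorem UnitPreservingOn.mono {n : ℕ} {S T : Set (EuclideanSpace ℝ (Fin n))}
    {f : EuclideanSpace ℝ (Fin n) → (Fin n → ℂ)} (hST : S ⊆ T) (hf : UnitPreservingOn n T f) :
    UnitPreservingOn n S f :=
  fun a ha b hb hab => hf a (hST ha) b (hST hb) hab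

theorem exists_finset_forall_phi_eq (n : ℕ) (T : Finset (EuclideanSpace ℝ (Fin n))) :
    ∃ S : Finset (EuclideanSpace ℝ (Fin n)), T ⊆ S ∧
      ∀ f : EuclideanSpace ℝ (Fin n) → (Fin n → ℂ), UnitPreservingOn n S f →
        ∀ u ∈ T, ∀ v ∈ T, MemD n (dist u v) → phi n (f u) (f v) = (dist u v : ℂ) ^ 2 := by
  classical
  have h (q : EuclideanSpace ℝ (Fin n) × EuclideanSpace ℝ (Fin n)) :
      ∃ S : Finset (EuclideanSpace ℝ (Fin n)), MemD n (dist q.1 q.2) →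
        ∀ f, UnitPreservingOn n S f → phi n (f q.1) (f q.2) = (dist q.1 q.2 : ℂ) ^ 2 := by
    by_cases hq : MemD n (dist q.1 q.2)
    · obtain ⟨S, -, -, hS⟩ := hq.2 q.1 q.2 rfl
      exact ⟨S, fun _ => hS⟩
    · exact ⟨∅, fun h => absurd h hq⟩
  choose S hS using h
  refine ⟨T ∪ (T ×ˢ T).biUnion S, subset_union_left, fun f hf u hu v hv huv => ?_⟩
  refine hS (u, v) huv f (hf.mono ?_)
  exact_mod_cast (subset_biUnion_of_mem S (mem_product.2 ⟨hu, hv⟩)).trans subset_union_right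

theorem memD_of_sq_eq {n : ℕ} (hn : 2 ≤ n) {a b ℓ D : ℝ} (hD : 0 < D)
    (hab : n * D ^ 2 = 4 * n * b ^ 2 - 2 * (n - 1) * a ^ 2) (hℓD : ℓ ≤ 2 * D) (hℓD' : ℓ ≠ D)
    (ha : MemD n a) (hb : MemD n b) (hℓ : MemD n ℓ) : MemD n D := by
  classical
  refine ⟨hD, fun x y hxy => ?_⟩
  obtain ⟨p, hpp, hpx, hpy⟩ :=
    EuclideanSpace.exists_simplex_equidistant (by omega) ha.1.le hb.1.le (hxy ▸ hab)
  obtain ⟨z, hxz, hyz⟩ :=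
    EuclideanSpace.exists_dist_eq_dist_eq hn (hxy ▸ hD) hℓ.1.le (hxy ▸ hℓD)
  obtain ⟨q, hqq, hqx, hqz⟩ :=
    EuclideanSpace.exists_simplex_equidistant (by omega) ha.1.le hb.1.le (hxz ▸ hxy ▸ hab)
  set T : Finset (EuclideanSpace ℝ (Fin n)) := {x, y, z} ∪ univ.image p ∪ univ.image q
  obtain ⟨S, hTS, hS⟩ := exists_finset_forall_phi_eq n T
  refine ⟨S, hTS (by simp [T]), hTS (by simp [T]), fun f hf => ?_⟩
  have hφ {u v} (hu : u ∈ T) (hv : v ∈ T) {r : ℝ} (huv : dist u v = r) (hr : MemD n r) :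
      phi n (f u) (f v) = (r : ℂ) ^ 2 :=
    huv ▸ hS f hf u hu v hv (huv ▸ hr)
  have habC : (n : ℂ) * D ^ 2 = 2 * (2 * n * b ^ 2 - (n - 1) * a ^ 2) := by
    have h : (n : ℝ) * D ^ 2 = 2 * (2 * n * b ^ 2 - (n - 1) * a ^ 2) := by linear_combination hab
    exact_mod_cast h
  have hsimplex (w : EuclideanSpace ℝ (Fin n)) (r : Fin n → EuclideanSpace ℝ (Fin n))
      (hw : w ∈ T) (hr : ∀ i, r i ∈ T) (hrr : ∀ i j, i ≠ j → dist (r i) (r j) = a)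
      (hrx : ∀ i, dist x (r i) = b) (hrw : ∀ i, dist w (r i) = b) :
      f x = f w ∨ phi n (f x) (f w) = (D : ℂ) ^ 2 :=
    eq_or_phi_eq (by omega) (pow_ne_zero 2 (by exact_mod_cast ha.1.ne'))
      (pow_ne_zero 2 (by exact_mod_cast hD.ne')) habC
      (fun i j hij => hφ (hr i) (hr j) (hrr i j hij) ha)
      (fun i => hφ (by simp [T]) (hr i) (hrx i) hb) (fun i => hφ hw (hr i) (hrw i) hb)
  rcases hsimplex y p (by simp [T]) (by simp [T]) hpp hpx hpy with hfy | hy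
  · have hℓ' : phi n (f y) (f z) = (ℓ : ℂ) ^ 2 := hφ (by simp [T]) (by simp [T]) hyz hℓ
    rcases hsimplex z q (by simp [T]) (by simp [T]) hqq hqx hqz with hfz | hz
    · rw [← hfy, ← hfz, phi_self] at hℓ'
      exact absurd (by exact_mod_cast hℓ'.symm) (pow_ne_zero 2 hℓ.1.ne')
    · rw [← hfy, hz] at hℓ'
      have : D ^ 2 = ℓ ^ 2 := by exact_mod_cast hℓ'
      exact absurd ((pow_left_inj₀ hD.le hℓ.1.le two_ne_zero).1 this).symm hℓD'
  · exact hy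

section Ladder

variable {n : ℕ}

theorem sq_sqrt_two_add_two_div : √(2 + 2 / n : ℝ) ^ 2 = 2 + 2 / n :=
  Real.sq_sqrt (by positivity)

theorem one_lt_sqrt_two_add_two_div : 1 < √(2 + 2 / n : ℝ) :=
  (Real.lt_sqrt zero_le_one).2 (by rw [one_pow]; linarith [show (0 : ℝ) ≤ 2 / n by positivity])

theorem sqrt_two_add_two_div_le_two (hn : 1 ≤ n) : √(2 + 2 / n : ℝ) ≤ 2 :=
  Real.sqrt_le_iff.2 ⟨zero_le_two, by
    linarith [div_le_self zero_le_two (by exact_mod_cast hn : (1 : ℝ) ≤ n)]⟩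

theorem memD_sqrt_two_add_two_div_mul (hn : 2 ≤ n) {b : ℝ} (hb : MemD n b) :
    MemD n (√(2 + 2 / n) * b) := by
  have hn' : (n : ℝ) ≠ 0 := by positivity
  have h1 := one_lt_sqrt_two_add_two_div (n := n)
  refine memD_of_sq_eq hn (mul_pos (by linarith) hb.1) ?_ (by nlinarith [hb.1]) ?_ hb hb hb
  · rw [mul_pow, sq_sqrt_two_add_two_div]
    field_simp
    ring
  · intro h
    nlinarith [hb.1]

theorem memD_two_div_mul (hn : 2 ≤ n) {b ℓ : ℝ} (hb : MemD n b) (hℓ : MemD n ℓ)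
    (hℓb : ℓ ≤ 2 * (2 / n * b)) (hℓb' : ℓ ≠ 2 / n * b) : MemD n (2 / n * b) := by
  have hn' : (n : ℝ) ≠ 0 := by positivity
  refine memD_of_sq_eq hn (mul_pos (by positivity) hb.1) ?_ hℓb hℓb'
    (memD_sqrt_two_add_two_div_mul hn hb) hb hℓ
  rw [mul_pow √_ b, sq_sqrt_two_add_two_div]
  field_simp
  ring

theorem memD_sqrt_two_add_two_div_pow_mul (hn : 2 ≤ n) {d : ℝ} (hd : MemD n d) (k : ℕ) :
    MemD n (√(2 + 2 / n) ^ k * d) := by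
  induction k with
  | zero => simpa using hd
  | succ k ih => rw [pow_succ', mul_assoc]; exact memD_sqrt_two_add_two_div_mul hn ih

end Ladder

theorem stmt17 (n : ℕ) (hn : 3 ≤ n) (d : ℝ) (hd : MemD n d) :
    MemD n ((2 / n) * d) := by
  have hn₂ : 2 ≤ n := by omega
  set κ := √(2 + 2 / n : ℝ)
  have hκ : 1 < κ := one_lt_sqrt_two_add_two_div
  have hκ₂ : κ ≤ 2 := sqrt_two_add_two_div_le_two (by omega)
  have hladder := memD_sqrt_two_add_two_div_pow_mul hn₂ hd
  obtain ⟨K, hK⟩ := pow_unbounded_of_one_lt (n / 2 : ℝ) hκ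
  have hK' : 1 < 2 / n * κ ^ K := by
    calc (1 : ℝ) = 2 / n * (n / 2) := by field_simp
      _ < 2 / n * κ ^ K := by gcongr
  have htop : MemD n (2 / n * (κ ^ K * d)) :=
    memD_two_div_mul hn₂ (hladder K) hd (by nlinarith [hd.1]) (by nlinarith [hd.1])
  have hdown (m : ℕ) (hm : m ≤ K) : MemD n (2 / n * (κ ^ m * d)) := by
    refine Nat.decreasingInduction (motive := fun m _ => MemD n (2 / n * (κ ^ m * d)))
      (fun k _ ih => ?_) htop hm
    have hpos : 0 < 2 / n * (κ ^ k * d) :=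
      mul_pos (by positivity) (mul_pos (pow_pos (by linarith) k) hd.1)
    have hℓ : 2 / n * (κ ^ (k + 1) * d) = κ * (2 / n * (κ ^ k * d)) := by ring
    exact memD_two_div_mul hn₂ (hladder k) ih (by rw [hℓ]; nlinarith) (by rw [hℓ]; nlinarith)
  simpa using hdown 0 K.zero_le
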